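/- Algebraic relations for the Marchenko–Pastur Stieltjes transforms. Fix y > 0. For every z in the complex upper half-plane, m_1 and m_2 satisfy the self-consistent equations m_1(z) + 1/(z − (1−y) + z y m_1(z)) = 0 and m_2(z) + 1/(z + (1−y) + z m_2(z)) = 0, the relation m_1(z) = (y^{−1} − 1)/z + y^{−1} m_2(z), and consequently 1 + z m_1(z) = −z m_1(z) m_2(z) and 1 + z m_2(z) = −z y m_1(z) m_2(z). -/

import Mathlib

/-!
With `r = i √((λ₊ − z)(z − λ₋))`, the only input beyond field arithmetic is
`r² = z² − 2(1 + y)z + (1 − y)²`, since the principal square root squares back to its argument.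
Then `z y m₁ = z m₂ + 1 − y` is a rational identity, `1 + z m₁ + z m₁ m₂ = 0` is the quadratic
equation satisfied by `m₁`, and the self-consistent equations are these two facts rewritten as
`m₁ · z (1 + m₂) = −1` and `m₂ · z (1 + y m₁) = −1`.
-/

noncomputable section

/-- `λ₊ = (1 + √y)²`. -/
def lamP (y : ℝ) : ℝ := (1 + Real.sqrt y) ^ 2

/-- `λ₋ = (1 − √y)²`. -/
def lamM (y : ℝ) : ℝ := (1 - Real.sqrt y) ^ 2

/-- The Marchenko–Pastur Stieltjes transform `m₁` on the upper half-plane, where the square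
root is the principal complex square root (branch cut on the negative real axis). -/
def m1C (y : ℝ) (z : ℂ) : ℂ :=
  (1 - (y : ℂ) - z + Complex.I * (((lamP y : ℂ) - z) * (z - (lamM y : ℂ))) ^ ((1 : ℂ) / 2))
    / (2 * z * (y : ℂ))

/-- The Marchenko–Pastur Stieltjes transform `m₂` on the upper half-plane. -/
def m2C (y : ℝ) (z : ℂ) : ℂ :=
  ((y : ℂ) - 1 - z + Complex.I * (((lamP y : ℂ) - z) * (z - (lamM y : ℂ))) ^ ((1 : ℂ) / 2))
    / (2 * z)

theorem add_one_div_eq_zero_of_mul_eq_neg_one {K : Type*} [DivisionRing K] {a b : K}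
    (h : a * b = -1) : a + 1 / b = 0 := by
  have hb : b ≠ 0 := by rintro rfl; simp at h
  rw [eq_div_of_mul_eq hb h, neg_div, neg_add_cancel]

def mpRoot (y : ℝ) (z : ℂ) : ℂ :=
  Complex.I * (((lamP y : ℂ) - z) * (z - (lamM y : ℂ))) ^ ((1 : ℂ) / 2)

theorem mpRoot_sq {y : ℝ} (hy : 0 ≤ y) (z : ℂ) :
    mpRoot y z ^ 2 = z ^ 2 - 2 * (1 + y) * z + (1 - y) ^ 2 := by
  have hsqrt : ((Real.sqrt y : ℝ) : ℂ) ^ 2 = y := by exact_mod_cast Real.sq_sqrt hy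
  rw [mpRoot, mul_pow, Complex.I_sq, one_div, Complex.cpow_ofNat_inv_pow, lamP, lamM]
  push_cast
  linear_combination ((Real.sqrt y : ℂ) ^ 2 + y - 2 * z - 2) * hsqrt

theorem m1C_def (y : ℝ) (z : ℂ) : m1C y z = (1 - y - z + mpRoot y z) / (2 * z * y) := rfl

theorem m2C_def (y : ℝ) (z : ℂ) : m2C y z = (y - 1 - z + mpRoot y z) / (2 * z) := rfl

theorem mul_mul_m1C {y : ℝ} (hy : y ≠ 0) {z : ℂ} (hz : z ≠ 0) :
    z * y * m1C y z = z * m2C y z + (1 - y) := by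
  have : (y : ℂ) ≠ 0 := by exact_mod_cast hy
  rw [m1C_def, m2C_def]
  field_simp
  ring

theorem m1C_eq_inv_sub_one_div_add {y : ℝ} (hy : y ≠ 0) {z : ℂ} (hz : z ≠ 0) :
    m1C y z = ((y : ℂ)⁻¹ - 1) / z + (y : ℂ)⁻¹ * m2C y z := by
  have : (y : ℂ) ≠ 0 := by exact_mod_cast hy
  field_simp
  linear_combination mul_mul_m1C hy hz

theorem one_add_mul_m1C {y : ℝ} (hy : 0 < y) {z : ℂ} (hz : z ≠ 0) :
    1 + z * m1C y z = -(z * m1C y z * m2C y z) := by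
  have : (y : ℂ) ≠ 0 := by exact_mod_cast hy.ne'
  rw [m1C_def, m2C_def]
  field_simp
  linear_combination mpRoot_sq hy.le z

theorem one_add_mul_m2C {y : ℝ} (hy : 0 < y) {z : ℂ} (hz : z ≠ 0) :
    1 + z * m2C y z = -(z * y * m1C y z * m2C y z) := by
  linear_combination y * one_add_mul_m1C hy hz - mul_mul_m1C hy.ne' hz

theorem m1C_add_one_div {y : ℝ} (hy : 0 < y) {z : ℂ} (hz : z ≠ 0) :
    m1C y z + 1 / (z - (1 - y) + z * y * m1C y z) = 0 := by
  refine add_one_div_eq_zero_of_mul_eq_neg_one ?_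
  rw [mul_mul_m1C hy.ne' hz]
  linear_combination one_add_mul_m1C hy hz

theorem m2C_add_one_div {y : ℝ} (hy : 0 < y) {z : ℂ} (hz : z ≠ 0) :
    m2C y z + 1 / (z + (1 - y) + z * m2C y z) = 0 :=
  add_one_div_eq_zero_of_mul_eq_neg_one <| by
    linear_combination one_add_mul_m2C hy hz - m2C y z * mul_mul_m1C hy.ne' hz

/-- **Algebraic relations for the Marchenko–Pastur Stieltjes transforms**: the
self-consistent equations, the linear relation between `m₁` and `m₂`, and the product
identities `1 + z m₁ = −z m₁ m₂` and `1 + z m₂ = −z y m₁ m₂`. -/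
theorem mp_stieltjes_relations (y : ℝ) (hy : 0 < y) (z : ℂ) (hz : 0 < z.im) :
    m1C y z + 1 / (z - (1 - (y : ℂ)) + z * (y : ℂ) * m1C y z) = 0 ∧
    m2C y z + 1 / (z + (1 - (y : ℂ)) + z * m2C y z) = 0 ∧
    m1C y z = ((y : ℂ)⁻¹ - 1) / z + (y : ℂ)⁻¹ * m2C y z ∧
    1 + z * m1C y z = -(z * m1C y z * m2C y z) ∧
    1 + z * m2C y z = -(z * (y : ℂ) * m1C y z * m2C y z) := by
  have hz0 : z ≠ 0 := ne_of_apply_ne Complex.im hz.ne'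
  exact ⟨m1C_add_one_div hy hz0, m2C_add_one_div hy hz0, m1C_eq_inv_sub_one_div_add hy.ne' hz0,
    one_add_mul_m1C hy hz0, one_add_mul_m2C hy hz0⟩

end
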